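/- If there is a polynomial P with χ(G) ≤ P(bp₁(G)) for all graphs G, then for every t ≥ 1 there is a polynomial P_t with χ(G) ≤ P_t(bp_t(G)) for all graphs G. -/

import Mathlib

/-- The number of bicliques of the family `B` covering the pair `{x, y}` (in either
orientation). -/
noncomputable def coverCount {V : Type*} {k : ℕ} (B : Fin k → Set V × Set V) (x y : V) : ℕ :=
  {i : Fin k | (x ∈ (B i).1 ∧ y ∈ (B i).2) ∨ (y ∈ (B i).1 ∧ x ∈ (B i).2)}.ncard

/-- A `t`-biclique covering of `G` of size `k`. -/
def IsBicliqueCover {V : Type*} (G : SimpleGraph V) (t : ℕ) {k : ℕ}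
    (B : Fin k → Set V × Set V) : Prop :=
  (∀ i, Disjoint (B i).1 (B i).2) ∧
  (∀ i, ∀ x ∈ (B i).1, ∀ y ∈ (B i).2, G.Adj x y) ∧
  (∀ x y, G.Adj x y → 1 ≤ coverCount B x y ∧ coverCount B x y ≤ t)

section AuxASS

open Classical

variable {V : Type*} {k : ℕ}

/-- `i`-th biclique covers the pair `{x,y}`. -/
def Covers (B : Fin k → Set V × Set V) (i : Fin k) (x y : V) : Prop :=
  (x ∈ (B i).1 ∧ y ∈ (B i).2) ∨ (y ∈ (B i).1 ∧ x ∈ (B i).2)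

lemma coverCount_eq (B : Fin k → Set V × Set V) (x y : V) :
    coverCount B x y = {i | Covers B i x y}.ncard := rfl

lemma covers_comm (B : Fin k → Set V × Set V) (i : Fin k) (x y : V) :
    Covers B i x y ↔ Covers B i y x := by unfold Covers; tauto

lemma coverCount_comm (B : Fin k → Set V × Set V) (x y : V) :
    coverCount B x y = coverCount B y x := by
  rw [coverCount_eq, coverCount_eq]
  congr 1; ext i; exact covers_comm B i x y

def side (p : Set V × Set V) (b : Bool) : Set V := if b then p.2 else p.1

variable {t : ℕ}

def Canonical (B : Fin k → Set V × Set V) (f : Fin (t+1) → Fin k × Bool) : Prop :=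
  StrictMono (fun j => (f j).1) ∧ (f 0).2 = false

def Lpart (B : Fin k → Set V × Set V) (f : Fin (t+1) → Fin k × Bool) : Set V :=
  {x | ∀ j, x ∈ side (B (f j).1) (f j).2}

def Rpart (B : Fin k → Set V × Set V) (f : Fin (t+1) → Fin k × Bool) : Set V :=
  {x | ∀ j, x ∈ side (B (f j).1) (!(f j).2)}

noncomputable def bic (B : Fin k → Set V × Set V) (f : Fin (t+1) → Fin k × Bool) :
    Set V × Set V :=
  if Canonical B f then (Lpart B f, Rpart B f) else (∅, ∅)

lemma mem_side_iff {p : Set V × Set V} {b : Bool} {x : V} :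
    x ∈ side p b ↔ (b = false ∧ x ∈ p.1) ∨ (b = true ∧ x ∈ p.2) := by
  cases b <;> simp [side]

lemma side_disjoint {p : Set V × Set V} (h : Disjoint p.1 p.2) (b : Bool) {x : V}
    (h1 : x ∈ side p b) (h2 : x ∈ side p (!b)) : False := by
  cases b <;> simp [side] at h1 h2
  · exact Set.disjoint_left.mp h h1 h2
  · exact Set.disjoint_left.mp h h2 h1

lemma bic_disjoint (B : Fin k → Set V × Set V) (hdisj : ∀ i, Disjoint (B i).1 (B i).2)
    (f : Fin (t+1) → Fin k × Bool) : Disjoint (bic B f).1 (bic B f).2 := by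
  unfold bic
  split
  · rw [Set.disjoint_left]
    intro x hx hy
    exact side_disjoint (hdisj (f 0).1) (f 0).2 (hx 0) (hy 0)
  · simp

lemma covers_of_sides {B : Fin k → Set V × Set V} {i : Fin k} {b : Bool} {x y : V}
    (hx : x ∈ side (B i) b) (hy : y ∈ side (B i) (!b)) : Covers B i x y := by
  cases b <;> simp [side] at hx hy
  · exact Or.inl ⟨hx, hy⟩
  · exact Or.inr ⟨hy, hx⟩

/-- Members of the parts of a canonical tuple form edges covered exactly `t+1` times. -/
lemma adj_of_parts {G : SimpleGraph V} {B : Fin k → Set V × Set V}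
    (hadj : ∀ i, ∀ x ∈ (B i).1, ∀ y ∈ (B i).2, G.Adj x y)
    (hub : ∀ x y, G.Adj x y → coverCount B x y ≤ t + 1)
    {f : Fin (t+1) → Fin k × Bool} (hc : Canonical B f)
    {x y : V} (hx : x ∈ Lpart B f) (hy : y ∈ Rpart B f) :
    G.Adj x y ∧ coverCount B x y = t + 1 := by
  have hcov : ∀ j, Covers B ((f j).1) x y := fun j => covers_of_sides (hx j) (hy j)
  have hG : G.Adj x y := by
    rcases hcov 0 with ⟨h1, h2⟩ | ⟨h1, h2⟩
    · exact hadj _ _ h1 _ h2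
    · exact (hadj _ _ h1 _ h2).symm
  refine ⟨hG, le_antisymm (hub x y hG) ?_⟩
  rw [coverCount_eq]
  have hsub : (fun j => (f j).1) '' Set.univ ⊆ {i | Covers B i x y} := by
    rintro i ⟨j, -, rfl⟩; exact hcov j
  calc t + 1 = (Set.univ : Set (Fin (t+1))).ncard := by
        rw [Set.ncard_univ]; simp
    _ = ((fun j => (f j).1) '' Set.univ).ncard :=
        (Set.ncard_image_of_injective _ hc.1.injective).symm
    _ ≤ {i | Covers B i x y}.ncard :=
        Set.ncard_le_ncard hsub (Set.toFinite _)

/-- Key uniqueness lemma, asymmetric version. -/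
lemma eq_singleton_aux {G : SimpleGraph V} {B : Fin k → Set V × Set V}
    (hdisj : ∀ i, Disjoint (B i).1 (B i).2)
    {x y : V} (g : Fin (t+1) → Fin k) (hg : StrictMono g)
    (hgcov : ∀ j, Covers B (g j) x y)
    (huniq : ∀ f' : Fin (t+1) → Fin k, StrictMono f' → (∀ j, Covers B (f' j) x y) → f' = g)
    (hcc : coverCount B x y = t + 1)
    (hx0 : x ∈ (B (g 0)).1) :
    ∃ f₀, {f : Fin (t+1) → Fin k × Bool |
      (x ∈ (bic B f).1 ∧ y ∈ (bic B f).2) ∨ (y ∈ (bic B f).1 ∧ x ∈ (bic B f).2)} = {f₀} := by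
  have hone : ∀ i, Covers B i x y → (x ∈ (B i).1 ↔ x ∉ (B i).2) := by
    intro i hi
    constructor
    · intro h1 h2; exact Set.disjoint_left.mp (hdisj i) h1 h2
    · intro h2
      rcases hi with ⟨h, _⟩ | ⟨_, h⟩
      · exact h
      · exact absurd h h2
  set f₀ : Fin (t+1) → Fin k × Bool := fun j => (g j, if x ∈ (B (g j)).1 then false else true)
    with hf₀
  have hcanon : Canonical B f₀ := by
    constructor
    · exact hg
    · simp only [hf₀, if_pos hx0]
  have hxL : x ∈ Lpart B f₀ := by
    intro j
    simp only [hf₀]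
    by_cases h : x ∈ (B (g j)).1
    · rw [if_pos h]; simpa [side] using h
    · rw [if_neg h]
      have hx2 : x ∈ (B (g j)).2 := by
        rcases hgcov j with ⟨h1, _⟩ | ⟨_, h1⟩
        · exact absurd h1 h
        · exact h1
      simpa [side] using hx2
  have hyR : y ∈ Rpart B f₀ := by
    intro j
    simp only [hf₀]
    by_cases h : x ∈ (B (g j)).1
    · rw [if_pos h]
      have hy2 : y ∈ (B (g j)).2 := by
        rcases hgcov j with ⟨_, h1⟩ | ⟨_, h1⟩
        · exact h1
        · exact absurd h1 ((hone _ (hgcov j)).mp h)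
      simpa [side] using hy2
    · rw [if_neg h]
      have hy1 : y ∈ (B (g j)).1 := by
        rcases hgcov j with ⟨h1, _⟩ | ⟨h1, _⟩
        · exact absurd h1 h
        · exact h1
      simpa [side] using hy1
  refine ⟨f₀, ?_⟩
  ext f
  simp only [Set.mem_setOf_eq, Set.mem_singleton_iff]
  constructor
  · rintro hmem
    by_cases hcf : Canonical B f
    swap
    · simp [bic, hcf] at hmem
    simp only [bic, if_pos hcf] at hmem
    -- each (f j).1 covers x y
    have hcov : ∀ j, Covers B ((f j).1) x y := by
      intro j
      rcases hmem with ⟨hxl, hyr⟩ | ⟨hyl, hxr⟩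
      · exact covers_of_sides (hxl j) (hyr j)
      · exact (covers_comm ..).mpr (covers_of_sides (hyl j) (hxr j))
    have hfeq : (fun j => (f j).1) = g := huniq _ hcf.1 hcov
    have hfj : ∀ j, (f j).1 = g j := fun j => congrFun hfeq j
    -- rule out the swapped orientation
    rcases hmem with ⟨hxl, hyr⟩ | ⟨hyl, hxr⟩
    · funext j
      have hxs := hxl j
      refine Prod.ext (hfj j) ?_
      simp only [hf₀]
      by_cases h : x ∈ (B (g j)).1
      · rw [if_pos h]
        cases hb : (f j).2
        · rfl
        · exfalso
          rw [hb, hfj j] at hxs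
          simp [side] at hxs
          have hcovj : Covers B (g j) x y := hfj j ▸ hcov j
          exact (hone (g j) hcovj).mp h hxs
      · rw [if_neg h]
        cases hb : (f j).2
        · exfalso
          rw [hb, hfj j] at hxs
          simp [side] at hxs
          exact h hxs
        · rfl
    · exfalso
      have h0 := hyl 0
      have hb0 : (f 0).2 = false := hcf.2
      rw [hb0, hfj 0] at h0
      simp [side] at h0
      have hx2 := hxr 0
      rw [hb0, hfj 0] at hx2
      simp [side] at hx2
      exact Set.disjoint_left.mp (hdisj (g 0)) hx0 hx2
  · rintro rfl
    left
    simp only [bic, if_pos hcanon]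
    exact ⟨hxL, hyR⟩

/-- Symmetric version: the set of canonical tuples covering an edge of multiplicity `t+1`
is a singleton. -/
lemma eq_singleton {G : SimpleGraph V} {B : Fin k → Set V × Set V}
    (hdisj : ∀ i, Disjoint (B i).1 (B i).2)
    {x y : V} (hG : G.Adj x y) (hcc : coverCount B x y = t + 1) :
    ∃ f₀, {f : Fin (t+1) → Fin k × Bool |
      (x ∈ (bic B f).1 ∧ y ∈ (bic B f).2) ∨ (y ∈ (bic B f).1 ∧ x ∈ (bic B f).2)} = {f₀} := by
  classical
  set S : Set (Fin k) := {i | Covers B i x y} with hS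
  have hfin : S.Finite := Set.toFinite _
  have hcard : hfin.toFinset.card = t + 1 := by
    rw [← Set.ncard_eq_toFinset_card _ hfin]
    exact hcc
  set g : Fin (t+1) → Fin k := fun j => hfin.toFinset.orderEmbOfFin hcard j with hgdef
  have hgmono : StrictMono g := (hfin.toFinset.orderEmbOfFin hcard).strictMono
  have hgcov : ∀ j, Covers B (g j) x y := by
    intro j
    have := hfin.toFinset.orderEmbOfFin_mem hcard j
    rw [Set.Finite.mem_toFinset] at this
    exact this
  have huniq : ∀ f' : Fin (t+1) → Fin k, StrictMono f' →
      (∀ j, Covers B (f' j) x y) → f' = g := by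
    intro f' hmono hcov
    have : f' = ⇑(hfin.toFinset.orderEmbOfFin hcard) :=
      Finset.orderEmbOfFin_unique hcard
        (fun j => (Set.Finite.mem_toFinset hfin).mpr (hcov j)) hmono
    exact this
  -- one of x, y is in (B (g 0)).1
  rcases hgcov 0 with ⟨hx1, -⟩ | ⟨hy1, -⟩
  · exact eq_singleton_aux (G := G) hdisj g hgmono hgcov huniq hcc hx1
  · -- swap x and y
    have hgcov' : ∀ j, Covers B (g j) y x := fun j => (covers_comm ..).mp (hgcov j)
    have huniq' : ∀ f' : Fin (t+1) → Fin k, StrictMono f' →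
        (∀ j, Covers B (f' j) y x) → f' = g := by
      intro f' hmono hcov
      exact huniq f' hmono (fun j => (covers_comm ..).mpr (hcov j))
    obtain ⟨f₀, hf₀⟩ := eq_singleton_aux (G := G) hdisj g hgmono hgcov' huniq'
      ((coverCount_comm B y x).trans hcc) hy1
    refine ⟨f₀, ?_⟩
    rw [← hf₀]
    ext f
    simp only [Set.mem_setOf_eq]
    tauto

end AuxASS

/-- If there is a polynomial `P` with `χ(G) ≤ P(bp₁(G))` for all graphs `G`, then for every
`t ≥ 1` there is a polynomial `P_t` with `χ(G) ≤ P_t(bp_t(G))` for all graphs `G`. -/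
theorem generalized_alon_saks_seymour_of_order_one (P : Polynomial ℕ)
    (hP : ∀ (V : Type) [Fintype V] (G : SimpleGraph V) (k : ℕ)
      (B : Fin k → Set V × Set V), IsBicliqueCover G 1 B → G.Colorable (P.eval k)) :
    ∀ t : ℕ, 1 ≤ t → ∃ Pt : Polynomial ℕ,
      ∀ (V : Type) [Fintype V] (G : SimpleGraph V) (k : ℕ)
        (B : Fin k → Set V × Set V), IsBicliqueCover G t B → G.Colorable (Pt.eval k) := by
  intro t ht
  induction t, ht using Nat.le_induction with
  | base => exact ⟨P, fun V _ G k B hB => hP V G k B hB⟩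
  | succ t ht ih =>
    obtain ⟨Pt, hPt⟩ := ih
    refine ⟨(P.comp ((Polynomial.C 2 * Polynomial.X) ^ (t+1))) * (Pt + 1), ?_⟩
    intro V _ G k B hB
    classical
    obtain ⟨hdisj, hadj, hcov⟩ := hB
    -- the graph of edges covered exactly t+1 times
    set H : SimpleGraph V :=
      { Adj := fun x y => G.Adj x y ∧ coverCount B x y = t + 1
        symm := ⟨by
          intro x y ⟨h1, h2⟩
          exact ⟨h1.symm, (coverCount_comm B y x).trans h2⟩⟩
        loopless := ⟨fun x h => G.loopless.irrefl x h.1⟩ } with hH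
    -- the 1-biclique cover of H
    have hcard : Fintype.card (Fin (t+1) → Fin k × Bool) = (2*k)^(t+1) := by
      simp [Fintype.card_fun]; ring
    set e : Fin ((2*k)^(t+1)) ≃ (Fin (t+1) → Fin k × Bool) :=
      (Fintype.equivFinOfCardEq hcard).symm with he
    set B' : Fin ((2*k)^(t+1)) → Set V × Set V := fun i => bic B (e i) with hB'
    have hub : ∀ x y, G.Adj x y → coverCount B x y ≤ t + 1 := fun x y h => (hcov x y h).2
    have hHcover : IsBicliqueCover H 1 B' := by
      refine ⟨fun i => bic_disjoint B hdisj (e i), ?_, ?_⟩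
      · intro i x hx y hy
        simp only [hB'] at hx hy
        by_cases hc : Canonical B (e i)
        · simp only [bic, if_pos hc] at hx hy
          exact adj_of_parts hadj hub hc hx hy
        · simp [bic, hc] at hx
      · intro x y hxy
        obtain ⟨f₀, hf₀⟩ := eq_singleton (G := G) hdisj hxy.1 hxy.2
        have : coverCount B' x y = 1 := by
          rw [coverCount_eq]
          have hset : {i | Covers B' i x y} = {e.symm f₀} := by
            ext i
            simp only [Set.mem_setOf_eq, Set.mem_singleton_iff]
            have : Covers B' i x y ↔ e i ∈ {f : Fin (t+1) → Fin k × Bool |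
                (x ∈ (bic B f).1 ∧ y ∈ (bic B f).2) ∨
                (y ∈ (bic B f).1 ∧ x ∈ (bic B f).2)} := Iff.rfl
            rw [this, hf₀, Set.mem_singleton_iff, Equiv.apply_eq_iff_eq_symm_apply]
          rw [hset, Set.ncard_singleton]
        omega
    have hHcol : H.Colorable (P.eval ((2*k)^(t+1))) := hP V H _ B' hHcover
    obtain ⟨CH⟩ := hHcol
    -- each color class induces a graph with a t-biclique cover by B
    have hclass : ∀ a : Fin (P.eval ((2*k)^(t+1))),
        (G.induce (⇑CH ⁻¹' {a})).Colorable (Pt.eval k) := by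
      intro a
      set s : Set V := ⇑CH ⁻¹' {a} with hs
      haveI : Fintype ↥s := Fintype.ofFinite _
      refine hPt ↥s (G.induce s) k
        (fun i => (Subtype.val ⁻¹' (B i).1, Subtype.val ⁻¹' (B i).2)) ?_
      have hccs : ∀ (u v : ↥s),
          coverCount (fun i => (Subtype.val ⁻¹' (B i).1, Subtype.val ⁻¹' (B i).2)) u v
            = coverCount B u.1 v.1 := by
        intro u v; rfl
      constructor
      · intro i
        exact Set.disjoint_left.mpr fun u hu hv => Set.disjoint_left.mp (hdisj i) hu hv
      constructor
      · intro i u hu v hv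
        exact hadj i u.1 hu v.1 hv
      · intro u v huv
        rw [hccs]
        have hG : G.Adj u.1 v.1 := huv
        refine ⟨(hcov _ _ hG).1, ?_⟩
        have hub' := (hcov _ _ hG).2
        have hne : coverCount B u.1 v.1 ≠ t + 1 := by
          intro hEq
          have hHadj : H.Adj u.1 v.1 := ⟨hG, hEq⟩
          have := CH.valid hHadj
          apply this
          have hu' : CH u.1 = a := u.2
          have hv' : CH v.1 = a := v.2
          rw [hu', hv']
        omega
    -- glue the colorings together
    have hglue : G.Colorable (P.eval ((2*k)^(t+1)) * (Pt.eval k + 1)) := by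
      have co : ∀ a : Fin (P.eval ((2*k)^(t+1))),
          (G.induce (⇑CH ⁻¹' {a})).Coloring (Fin (Pt.eval k)) :=
        fun a => (hclass a).some
      set extc : Fin (P.eval ((2*k)^(t+1))) → V → (Fin (Pt.eval k) ⊕ Unit) := fun a v =>
        if hv : CH v = a then Sum.inl (co a ⟨v, hv⟩) else Sum.inr () with hext
      have hvalid : ∀ {u v : V}, G.Adj u v →
          (CH u, extc (CH u) u) ≠ (CH v, extc (CH v) v) := by
        intro u v huv hcontra
        have h1 : CH u = CH v := congrArg Prod.fst hcontra
        have h2 : extc (CH u) u = extc (CH v) v := congrArg Prod.snd hcontra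
        rw [h1] at h2
        simp only [hext] at h2
        rw [dif_pos h1] at h2
        have h3 : co (CH v) ⟨u, h1⟩ = co (CH v) ⟨v, rfl⟩ := by
          simpa using h2
        have hadj' : (G.induce (⇑CH ⁻¹' {CH v})).Adj ⟨u, h1⟩ ⟨v, rfl⟩ := huv
        exact (co (CH v)).valid hadj' h3
      have C : G.Coloring (Fin (P.eval ((2*k)^(t+1))) × (Fin (Pt.eval k) ⊕ Unit)) :=
        SimpleGraph.Coloring.mk (fun v => (CH v, extc (CH v) v)) hvalid
      have hcol := C.colorable
      have hcard2 : Fintype.card (Fin (P.eval ((2*k)^(t+1))) × (Fin (Pt.eval k) ⊕ Unit))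
          = P.eval ((2*k)^(t+1)) * (Pt.eval k + 1) := by simp
      rwa [hcard2] at hcol
    have heval : ((P.comp ((Polynomial.C 2 * Polynomial.X) ^ (t+1))) * (Pt + 1)).eval k
        = P.eval ((2*k)^(t+1)) * (Pt.eval k + 1) := by
      simp [Polynomial.eval_comp]
    rw [heval]
    exact hglue
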